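/- For all x > 0, the modified Bessel function of the second kind of order zero satisfies K₀(x) ≤ √(π/(2x))·e^{−x}. -/

import Mathlib

/-! Since `cosh t ≥ 1 + t² / 2`, the integrand of `K₀(x)` is dominated by the Gaussian
`e^{-x} e^{-x t² / 2}`, whose integral over `(0, ∞)` is `e^{-x} √(π / (2x))`. -/

open MeasureTheory Real Set

/-- The modified Bessel function of the second kind of order zero,
`K₀(x) = ∫₀^∞ exp(-x cosh t) dt`. -/
noncomputable def K0 (x : ℝ) : ℝ := ∫ t in Set.Ioi (0:ℝ), Real.exp (-x * Real.cosh t)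

lemma Real.one_add_sq_div_two_le_cosh (t : ℝ) : 1 + t ^ 2 / 2 ≤ cosh t := by
  rw [← cosh_abs, ← sq_abs]
  obtain ⟨s, hs0, hts⟩ : ∃ s, 0 ≤ s ∧ |t| = 2 * s := ⟨|t| / 2, by positivity, by ring⟩
  have hsq : s ^ 2 ≤ sinh s ^ 2 := pow_le_pow_left₀ hs0 (self_le_sinh_iff.mpr hs0) 2
  rw [hts, cosh_two_mul, cosh_sq]
  linarith

lemma Real.exp_neg_mul_cosh_le {x : ℝ} (hx : 0 ≤ x) (t : ℝ) :
    exp (-x * cosh t) ≤ exp (-x) * exp (-(x / 2) * t ^ 2) := by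
  rw [← exp_add, exp_le_exp]
  nlinarith [one_add_sq_div_two_le_cosh t]

lemma Real.integrable_exp_neg_mul_cosh {x : ℝ} (hx : 0 < x) :
    Integrable fun t => exp (-x * cosh t) := by
  refine ((integrable_exp_neg_mul_sq (half_pos hx)).const_mul (exp (-x))).mono'
    (continuous_exp.comp (by fun_prop)).aestronglyMeasurable (ae_of_all _ fun t => ?_)
  rw [norm_of_nonneg (exp_pos _).le]
  exact exp_neg_mul_cosh_le hx.le t

/-- For all `x > 0`, `K₀(x) ≤ √(π/(2x)) e^{-x}`. -/
theorem stmt3 : ∀ x : ℝ, 0 < x → K0 x ≤ Real.sqrt (π / (2 * x)) * Real.exp (-x) := by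
  intro x hx
  have hgauss := (integrable_exp_neg_mul_sq (half_pos hx)).const_mul (exp (-x))
  calc K0 x ≤ ∫ t in Ioi (0:ℝ), exp (-x) * exp (-(x / 2) * t ^ 2) :=
        setIntegral_mono (integrable_exp_neg_mul_cosh hx).integrableOn hgauss.integrableOn
          (exp_neg_mul_cosh_le hx.le)
    _ = exp (-x) * (√(π / (x / 2)) / 2) := by rw [integral_const_mul, integral_gaussian_Ioi]
    _ = √(π / (2 * x)) * exp (-x) := by
        rw [show π / (x / 2) = 2 ^ 2 * (π / (2 * x)) by field_simp,
          sqrt_mul (by positivity), sqrt_sq zero_le_two]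
        ring
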